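/- arXiv:0909.1227 — 3 statements merged into one kernel-verified Lean document; each statement's English description precedes it below -/
import Mathlib

section
/- Let G be a group, V a nonzero complex vector space of finite dimension d, and let T be a projective representation of G on V with factor set γ. Then there exists c : G → ℂˣ such that the rescaled map g ↦ c(g) • T(g) is a projective representation of G on V whose factor set γ′(g,h) = γ(g,h)·c(g)·c(h)·c(g·h)⁻¹ satisfies γ′(g,h)^d = 1 for all g,h ∈ G; that is, the lifts can be chosen so that the factor set takes values in the complex d-th roots of unity. -/
/-!
Taking determinants of `T g ∘ T h = γ g h • T (g * h)` gives
`det (T g) * det (T h) = γ g h ^ d * det (T (g * h))`, i.e. `γ ^ d` is the coboundary of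
`g ↦ det (T g)`. Since `ℂ` is algebraically closed we may pick `c g` with
`c g ^ d = (det (T g))⁻¹`; rescaling by `c` multiplies `γ` by the coboundary of `c`, whose
`d`-th power cancels that of `γ ^ d`.
-/

theorem IsAlgClosed.exists_units_pow_eq {k : Type*} [Field k] [IsAlgClosed k] (u : kˣ) {n : ℕ}
    (hn : n ≠ 0) : ∃ z : kˣ, z ^ n = u := by
  obtain ⟨z, hz⟩ := IsAlgClosed.exists_pow_nat_eq (u : k) (Nat.pos_of_ne_zero hn)
  have hz0 : z ≠ 0 := fun h0 => u.ne_zero (by rw [← hz, h0, zero_pow hn])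
  exact ⟨Units.mk0 z hz0, Units.ext (by simpa using hz)⟩

theorem LinearEquiv.det_mul_det_of_comp_eq_smul {A M : Type*} [CommRing A] [AddCommGroup M]
    [Module A M] [Module.Free A M] {e₁ e₂ e : M ≃ₗ[A] M} {a : Aˣ}
    (h : e₁.toLinearMap ∘ₗ e₂.toLinearMap = (a : A) • e.toLinearMap) :
    LinearEquiv.det e₁ * LinearEquiv.det e₂ = a ^ Module.finrank A M * LinearEquiv.det e := by
  ext
  push_cast
  simp only [LinearEquiv.coe_det]
  rw [← LinearMap.det_comp, h, LinearMap.det_smul]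

theorem LinearMap.smul_comp_smul_eq_of_comp_eq_smul {A M : Type*} [CommRing A] [AddCommGroup M]
    [Module A M] {f g h : M →ₗ[A] M} {γ : Aˣ} (hfgh : f ∘ₗ g = (γ : A) • h) (a b c : Aˣ) :
    ((a : A) • f) ∘ₗ ((b : A) • g) = ((γ * a * b * c⁻¹ : Aˣ) : A) • ((c : A) • h) := by
  rw [LinearMap.smul_comp, LinearMap.comp_smul, hfgh, smul_smul, smul_smul, smul_smul]
  congr 1
  simp only [Units.val_mul, mul_assoc, Units.inv_mul, mul_one]
  ring

theorem mul_coboundary_pow_eq_one {G M : Type*} [Mul G] [CommGroup M] {d : ℕ} {γ : G → G → M}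
    {u c : G → M} (hγ : ∀ g h, γ g h ^ d * u (g * h) = u g * u h) (hc : ∀ g, c g ^ d = (u g)⁻¹)
    (g h : G) : (γ g h * c g * c h * (c (g * h))⁻¹) ^ d = 1 := by
  calc (γ g h * c g * c h * (c (g * h))⁻¹) ^ d
      = γ g h ^ d * u (g * h) * (u g * u h)⁻¹ := by
        rw [mul_pow, mul_pow, mul_pow, inv_pow, hc, hc, hc, inv_inv, mul_inv]
        ac_rfl
    _ = 1 := by rw [hγ, mul_inv_cancel]

/-- If `T` is a projective representation with factor set `γ` of `G` on a
nonzero complex vector space `V` of finite dimension `d`, then the lifts can be rescaled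
by some `c : G → ℂˣ` so that the rescaled map `g ↦ c g • T g` is a projective
representation whose factor set `γ'(g,h) = γ(g,h)·c(g)·c(h)·c(g·h)⁻¹` takes values in
the complex `d`-th roots of unity. -/
theorem lifts_can_be_chosen_with_root_of_unity_factorSet
    {G V : Type*} [Group G] [AddCommGroup V] [Module ℂ V] [Nontrivial V]
    [FiniteDimensional ℂ V] (d : ℕ) (hd : d = Module.finrank ℂ V)
    (T : G → (V ≃ₗ[ℂ] V)) (γ : G → G → ℂˣ)
    (hT : ∀ g h : G, (T g).toLinearMap ∘ₗ (T h).toLinearMap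
        = (γ g h : ℂ) • (T (g * h)).toLinearMap) :
    ∃ c : G → ℂˣ,
      (∀ g h : G, ((c g : ℂ) • (T g).toLinearMap) ∘ₗ ((c h : ℂ) • (T h).toLinearMap)
          = ((γ g h * c g * c h * (c (g * h))⁻¹ : ℂˣ) : ℂ) •
              ((c (g * h) : ℂ) • (T (g * h)).toLinearMap)) ∧
      ∀ g h : G, (γ g h * c g * c h * (c (g * h))⁻¹) ^ d = 1 := by
  have hd0 : d ≠ 0 := hd ▸ Module.finrank_pos.ne'
  choose c hc using fun g => IsAlgClosed.exists_units_pow_eq (LinearEquiv.det (T g))⁻¹ hd0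
  have hdet : ∀ g h, γ g h ^ d * LinearEquiv.det (T (g * h)) =
      LinearEquiv.det (T g) * LinearEquiv.det (T h) := fun g h =>
    hd ▸ (LinearEquiv.det_mul_det_of_comp_eq_smul (hT g h)).symm
  exact ⟨c, fun g h => LinearMap.smul_comp_smul_eq_of_comp_eq_smul (hT g h) _ _ _,
    mul_coboundary_pow_eq_one hdet hc⟩
end

section
/- Let G be a group, N a normal subgroup of G with quotient map q : G → G/N, V a nonzero complex vector space, and T a projective representation of G on V with factor set γ. Suppose that for every n ∈ N the automorphism T(n) is a scalar, i.e. T(n) = λ(n) • id_V for some λ(n) ∈ ℂˣ. Then γ is cohomologous to a cocycle pulled back from the quotient: there exist a 2-cocycle γ̄ : (G/N) × (G/N) → ℂˣ and a function c : G → ℂˣ such that γ(g,h) = γ̄(q(g), q(h))·c(g)·c(h)·c(g·h)⁻¹ for all g,h ∈ G. -/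
/-- Let `N` be a normal subgroup of `G` and `T` a projective representation
of `G` on a nonzero complex vector space `V` with factor set `γ`. If `T n` is a scalar
for every `n ∈ N`, then `γ` is cohomologous to a cocycle pulled back from the quotient
`G/N`: there are a 2-cocycle `γb` on `G/N` and `c : G → ℂˣ` with
`γ g h = γb (q g) (q h) * c g * c h * (c (g*h))⁻¹` for all `g, h ∈ G`. -/
theorem factorSet_descends_to_quotient_of_scalar_normal_subgroup
    {G V : Type*} [Group G] [AddCommGroup V] [Module ℂ V] [Nontrivial V]
    (N : Subgroup G) [N.Normal]
    (T : G → (V ≃ₗ[ℂ] V)) (γ : G → G → ℂˣ)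
    (hT : ∀ g h : G, (T g).toLinearMap ∘ₗ (T h).toLinearMap
        = (γ g h : ℂ) • (T (g * h)).toLinearMap)
    (hscal : ∀ n ∈ N, ∃ lam : ℂˣ, (T n).toLinearMap = (lam : ℂ) • LinearMap.id) :
    ∃ (γb : G ⧸ N → G ⧸ N → ℂˣ) (c : G → ℂˣ),
      (∀ x y z : G ⧸ N, γb x y * γb (x * y) z = γb x (y * z) * γb y z) ∧
      ∀ g h : G, γ g h = γb (↑g) (↑h) * c g * c h * (c (g * h))⁻¹ := by
  classical
  -- cancellation of scalars against an equivalence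
  have cancel : ∀ (u v : ℂˣ) (e : V ≃ₗ[ℂ] V),
      (u : ℂ) • e.toLinearMap = (v : ℂ) • e.toLinearMap → u = v := by
    intro u v e h
    obtain ⟨w, hw⟩ := exists_ne (0 : V)
    have h1 := LinearMap.congr_fun h w
    simp only [LinearMap.smul_apply, LinearEquiv.coe_coe] at h1
    have hew : e w ≠ 0 := by simpa using hw
    exact Units.ext (smul_left_injective ℂ hew h1)
  set s : G ⧸ N → G := Quotient.out with hsdef
  have hs : ∀ x : G ⧸ N, ((s x : G) : G ⧸ N) = x := fun x => QuotientGroup.out_eq' x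
  -- existence of the comparison scalars d
  have hdex : ∀ g : G, ∃ d : ℂˣ,
      (T g).toLinearMap = (d : ℂ) • (T (s ↑g)).toLinearMap := by
    intro g
    have hn : (s ↑g)⁻¹ * g ∈ N := by
      have h1 : (((s (↑g : G ⧸ N))⁻¹ * g : G) : G ⧸ N) = 1 := by
        rw [QuotientGroup.mk_mul, QuotientGroup.mk_inv, hs, inv_mul_cancel]
      exact (QuotientGroup.eq_one_iff _).mp h1
    obtain ⟨lam, hlam⟩ := hscal _ hn
    have h2 := hT (s ↑g) ((s ↑g)⁻¹ * g)
    rw [hlam, mul_inv_cancel_left] at h2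
    simp only [LinearMap.comp_smul, LinearMap.comp_id] at h2
    refine ⟨(γ (s ↑g) ((s ↑g)⁻¹ * g))⁻¹ * lam, ?_⟩
    have hγne : (γ (s ↑g) ((s ↑g)⁻¹ * g) : ℂ) ≠ 0 := Units.ne_zero _
    rw [Units.val_mul, Units.val_inv_eq_inv_val, mul_smul, h2, smul_smul,
      inv_mul_cancel₀ hγne, one_smul]
  choose d hd using hdex
  -- existence of γb
  have hbex : ∀ x y : G ⧸ N, ∃ u : ℂˣ,
      (T (s x)).toLinearMap ∘ₗ (T (s y)).toLinearMap
        = (u : ℂ) • (T (s (x * y))).toLinearMap := by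
    intro x y
    refine ⟨γ (s x) (s y) * d (s x * s y), ?_⟩
    have hxy : ((s x * s y : G) : G ⧸ N) = x * y := by
      rw [QuotientGroup.mk_mul, hs, hs]
    rw [hT, hd (s x * s y), hxy, smul_smul, Units.val_mul]
  choose γb hγb using hbex
  refine ⟨γb, d, ?_, ?_⟩
  · intro x y z
    have e1 : ((T (s x)).toLinearMap ∘ₗ (T (s y)).toLinearMap) ∘ₗ (T (s z)).toLinearMap
        = ((γb x y * γb (x * y) z : ℂˣ) : ℂ) • (T (s (x * y * z))).toLinearMap := by
      rw [hγb x y, LinearMap.smul_comp, hγb (x * y) z, smul_smul, Units.val_mul]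
    have e2 : ((T (s x)).toLinearMap ∘ₗ (T (s y)).toLinearMap) ∘ₗ (T (s z)).toLinearMap
        = ((γb x (y * z) * γb y z : ℂˣ) : ℂ) • (T (s (x * y * z))).toLinearMap := by
      rw [LinearMap.comp_assoc, hγb y z, LinearMap.comp_smul, hγb x (y * z),
        smul_smul, mul_assoc]
      push_cast
      ring_nf
    exact cancel _ _ _ (e1.symm.trans e2)
  · intro g h
    have hgh : ((↑g : G ⧸ N) * ↑h) = (↑(g * h) : G ⧸ N) := (QuotientGroup.mk_mul _ _ _).symm
    have e1 : (T g).toLinearMap ∘ₗ (T h).toLinearMap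
        = ((γ g h * d (g * h) : ℂˣ) : ℂ) • (T (s ↑(g * h))).toLinearMap := by
      rw [hT, hd (g * h), smul_smul, Units.val_mul]
    have e2 : (T g).toLinearMap ∘ₗ (T h).toLinearMap
        = ((d g * d h * γb ↑g ↑h : ℂˣ) : ℂ) • (T (s ↑(g * h))).toLinearMap := by
      rw [hd g, hd h, LinearMap.smul_comp, LinearMap.comp_smul, hγb (↑g) (↑h), hgh,
        smul_smul, smul_smul]
      push_cast
      ring_nf
    have heq : γ g h * d (g * h) = d g * d h * γb ↑g ↑h :=
      cancel _ _ _ (e1.symm.trans e2)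
    have heqC : (γ g h : ℂ) * d (g * h) = (d g : ℂ) * d h * γb ↑g ↑h := by
      exact_mod_cast congrArg Units.val heq
    refine Units.ext ?_
    push_cast
    field_simp
    linear_combination heqC
end

section
/- Let X be a free abelian group of finite rank, V = ℚ ⊗_ℤ X, and suppose V = U ⊕ U′ is a direct sum of ℚ-subspaces such that X ∩ U spans U over ℚ and X ∩ U′ spans U′ over ℚ (X being viewed inside V via x ↦ 1 ⊗ x). Let p : V → U′ be the projection along U and set X_P := p(X), a subgroup of U′ containing p(X ∩ U′) = X ∩ U′. Then the group K := {χ ∈ Hom(X, ℂˣ) : χ(x) = 1 for all x ∈ X ∩ U and χ(x) = 1 for all x ∈ X ∩ U′} is a finite abelian group, isomorphic to Hom(X_P/(X ∩ U′), ℂˣ). -/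
open TensorProduct

/-!
Sending `x ∈ X` to the class of `p x` is a surjection `ρ : X → X_P/(X ∩ U')` whose kernel is
`(X ∩ U) + (X ∩ U')`: an `x` with `p x = y ∈ X ∩ U'` splits as `(x - y) + y` with `x - y ∈ U`.
Precomposition with `ρ` therefore identifies the characters of `X_P/(X ∩ U')` with the characters
of `X` trivial on `X ∩ U` and on `X ∩ U'`, i.e. with `K`. Since `(X ∩ U) + (X ∩ U')` spans
`V = U ⊕ U'` over `ℚ`, it has finite index in the finitely generated group `X`, so
`X_P/(X ∩ U')` is finite and has only finitely many characters.
-/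

theorem AddSubgroup.exists_nsmul_mem_of_mem_span_rat {V : Type*} [AddCommGroup V] [Module ℚ V]
    (S : AddSubgroup V) {v : V} (hv : v ∈ Submodule.span ℚ (S : Set V)) :
    ∃ n : ℕ, 0 < n ∧ n • v ∈ S := by
  induction hv using Submodule.span_induction with
  | mem w hw => exact ⟨1, one_pos, by simpa using hw⟩
  | zero => exact ⟨1, one_pos, by simp⟩
  | add x y _ _ hx hy =>
    obtain ⟨n, hn, hnx⟩ := hx
    obtain ⟨m, hm, hmy⟩ := hy
    refine ⟨m * n, Nat.mul_pos hm hn, ?_⟩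
    rw [smul_add, mul_smul, mul_comm, mul_smul]
    exact add_mem (S.nsmul_mem hnx m) (S.nsmul_mem hmy n)
  | smul q x _ hx =>
    obtain ⟨n, hn, hnx⟩ := hx
    refine ⟨q.den * n, Nat.mul_pos q.den_pos hn, ?_⟩
    have : (q.den * n) • q • x = q.num • n • x := by
      rw [← Nat.cast_smul_eq_nsmul ℚ, ← Nat.cast_smul_eq_nsmul ℚ n, ← Int.cast_smul_eq_zsmul ℚ,
        smul_smul, smul_smul, Nat.cast_mul, mul_right_comm, Rat.den_mul_eq_num]
    rw [this]
    exact S.zsmul_mem hnx _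

theorem AddSubgroup.finite_quotient_of_forall_mem_span_rat {X V : Type*} [AddCommGroup X]
    [Module.Finite ℤ X] [AddCommGroup V] [Module ℚ V] (ι : X →+ V) (N : AddSubgroup X)
    (hker : ι.ker ≤ N) (hspan : ∀ x, ι x ∈ Submodule.span ℚ (N.map ι : Set V)) :
    Finite (X ⧸ N) := by
  have : AddGroup.FG X := Module.Finite.iff_addGroup_fg.mp ‹_›
  refine AddCommGroup.finite_of_fg_isAddTorsion _ ?_
  rintro ⟨x⟩
  obtain ⟨n, hn, y, hy, hyx⟩ := (N.map ι).exists_nsmul_mem_of_mem_span_rat (hspan x)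
  have hnx : n • x ∈ N := by
    have : n • x - y ∈ N := hker (by simp [hyx])
    simpa using add_mem this hy
  exact isOfFinAddOrder_iff_nsmul_eq_zero.mpr
    ⟨n, hn, (QuotientAddGroup.eq_zero_iff _).mpr hnx⟩

theorem AddMonoidHom.exists_surjective_toQuotient_ker_eq_comap {X V : Type*} [AddGroup X]
    [AddCommGroup V] (g : X →+ V) (L : AddSubgroup V) :
    ∃ ρ : X →+ g.range ⧸ L.addSubgroupOf g.range,
      Function.Surjective ρ ∧ ρ.ker = L.comap g := by
  refine ⟨(QuotientAddGroup.mk' _).comp g.rangeRestrict,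
    (QuotientAddGroup.mk'_surjective _).comp g.rangeRestrict_surjective, ?_⟩
  ext x
  simp [QuotientAddGroup.eq_zero_iff, AddSubgroup.mem_addSubgroupOf]

section Projection

variable {R V : Type*} [Ring R] [AddCommGroup V] [Module R V] {U U' : Submodule R V}
  {p : V →ₗ[R] V}

theorem sub_apply_mem_of_codisjoint (hUU' : Codisjoint U U') (hpU : ∀ v ∈ U, p v = 0)
    (hpU' : ∀ v ∈ U', p v = v) (v : V) : v - p v ∈ U := by
  obtain ⟨u, hu, u', hu', rfl⟩ := Submodule.mem_sup.mp (hUU'.eq_top ▸ Submodule.mem_top (x := v))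
  simpa [hpU u hu, hpU' u' hu'] using hu

theorem comap_sup_comap_eq_comap_projection {X : Type*} [AddCommGroup X] (ι : X →+ V)
    (hUU' : Codisjoint U U') (hpU : ∀ v ∈ U, p v = 0) (hpU' : ∀ v ∈ U', p v = v) :
    U.toAddSubgroup.comap ι ⊔ U'.toAddSubgroup.comap ι =
      (ι.range ⊓ U'.toAddSubgroup).comap (p.toAddMonoidHom.comp ι) := by
  ext x
  constructor
  · intro hx
    obtain ⟨a, ha, b, hb, rfl⟩ := AddSubgroup.mem_sup.mp hx
    have hpx : p (ι (a + b)) = ι b := by rw [map_add, map_add, hpU _ ha, hpU' _ hb, zero_add]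
    exact ⟨⟨b, hpx.symm⟩, hpx ▸ hb⟩
  · rintro ⟨⟨y, hy⟩, hyU'⟩
    have hxy : ι (x - y) ∈ U := by
      simpa [hy] using sub_apply_mem_of_codisjoint hUU' hpU hpU' (ι x)
    exact AddSubgroup.mem_sup.mpr ⟨x - y, hxy, y, by simpa [hy] using hyU', sub_add_cancel x y⟩

end Projection

section Characters

variable {G H M : Type*} [Group G] [Group H] [CommGroup M] {f : G →* H}

theorem MonoidHom.compHom'_injective (hf : Function.Surjective f) :
    Function.Injective (compHom' f : (H →* M) →* G →* M) :=
  fun _ _ h ↦ (cancel_right hf).mp h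

theorem MonoidHom.mem_range_compHom'_iff (hf : Function.Surjective f) (χ : G →* M) :
    χ ∈ (compHom' f).range ↔ f.ker ≤ χ.ker := by
  constructor
  · rintro ⟨θ, rfl⟩ x hx
    simp_all [compHom']
  · intro h
    exact ⟨f.liftOfSurjective hf ⟨χ, h⟩,
      f.liftOfRightInverse_comp _ (Function.rightInverse_surjInv hf) ⟨χ, h⟩⟩

theorem MonoidHom.nonempty_mulEquiv_of_forall_mem_iff_ker_le (hf : Function.Surjective f)
    (K : Subgroup (G →* M)) (hK : ∀ χ, χ ∈ K ↔ f.ker ≤ χ.ker) :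
    Nonempty (K ≃* (H →* M)) := by
  have hK' : K = (compHom' f).range := by
    ext χ
    rw [hK, mem_range_compHom'_iff hf]
  exact ⟨(MulEquiv.subgroupCongr hK').trans (ofInjective (compHom'_injective hf)).symm⟩

end Characters

theorem characters_trivial_on_summands_finite_and_iso_general
    (X : Type*) [AddCommGroup X] [Module.Finite ℤ X]
    (U U' : Submodule ℚ (ℚ ⊗[ℤ] X)) (hUU' : IsCompl U U')
    (ι : X →+ ℚ ⊗[ℤ] X)
    (hU : Submodule.span ℚ (Set.range ι ∩ (U : Set (ℚ ⊗[ℤ] X))) = U)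
    (hU' : Submodule.span ℚ (Set.range ι ∩ (U' : Set (ℚ ⊗[ℤ] X))) = U')
    (p : (ℚ ⊗[ℤ] X) →ₗ[ℚ] ℚ ⊗[ℤ] X)
    (hpU : ∀ v ∈ U, p v = 0) (hpU' : ∀ v ∈ U', p v = v)
    (K : Subgroup (Multiplicative X →* ℂˣ))
    (hK : ∀ χ : Multiplicative X →* ℂˣ, χ ∈ K ↔
        (∀ x : X, ι x ∈ U → χ (Multiplicative.ofAdd x) = 1) ∧
        (∀ x : X, ι x ∈ U' → χ (Multiplicative.ofAdd x) = 1))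
    (XP : AddSubgroup (ℚ ⊗[ℤ] X))
    (hXP : XP = AddSubgroup.map p.toAddMonoidHom ι.range)
    (XU' : AddSubgroup (ℚ ⊗[ℤ] X))
    (hXU' : XU' = ι.range ⊓ U'.toAddSubgroup) :
    Finite K ∧
      Nonempty (K ≃*
        (Multiplicative (↥XP ⧸ (XU'.addSubgroupOf XP)) →* ℂˣ)) := by
  rw [← AddMonoidHom.range_comp] at hXP
  subst hXP hXU'
  set A := U.toAddSubgroup.comap ι
  set B := U'.toAddSubgroup.comap ι
  obtain ⟨ρ, hρ, hker⟩ := AddMonoidHom.exists_surjective_toQuotient_ker_eq_comap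
    (p.toAddMonoidHom.comp ι) (ι.range ⊓ U'.toAddSubgroup)
  rw [← comap_sup_comap_eq_comap_projection ι hUU'.codisjoint hpU hpU'] at hker
  have hspan (x : X) : ι x ∈ Submodule.span ℚ ((A ⊔ B).map ι : Set (ℚ ⊗[ℤ] X)) := by
    have : U ⊔ U' ≤ Submodule.span ℚ ((A ⊔ B).map ι : Set (ℚ ⊗[ℤ] X)) := by
      rw [← hU, ← hU']
      refine sup_le (Submodule.span_mono ?_) (Submodule.span_mono ?_) <;>
        rintro _ ⟨⟨a, rfl⟩, ha⟩
      exacts [⟨a, AddSubgroup.mem_sup_left ha, rfl⟩, ⟨a, AddSubgroup.mem_sup_right ha, rfl⟩]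
    exact this (hUU'.codisjoint.eq_top ▸ Submodule.mem_top)
  have : Finite (X ⧸ ρ.ker) := hker ▸ AddSubgroup.finite_quotient_of_forall_mem_span_rat ι _
    (fun x hx ↦ AddSubgroup.mem_sup_left (by simp_all [A])) hspan
  have := Finite.of_equiv _ (QuotientAddGroup.quotientKerEquivOfSurjective ρ hρ).toEquiv
  have hKker (χ : Multiplicative X →* ℂˣ) :
      χ ∈ K ↔ (AddMonoidHom.toMultiplicative ρ).ker ≤ χ.ker := by
    rw [MonoidHom.coe_toMultiplicative_ker, hker, OrderIso.map_sup, sup_le_iff, hK]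
    rfl
  obtain ⟨e⟩ := MonoidHom.nonempty_mulEquiv_of_forall_mem_iff_ker_le hρ K hKker
  exact ⟨Finite.of_equiv _ e.toEquiv.symm, ⟨e⟩⟩

/-- Let `X` be a free abelian group of finite rank, `V = ℚ ⊗_ℤ X`, and
`V = U ⊕ U'` a direct sum of ℚ-subspaces such that `X ∩ U` spans `U` and `X ∩ U'`
spans `U'` (with `X` embedded in `V` via `ι : x ↦ 1 ⊗ x`). Let `p` be the projection
of `V` onto `U'` along `U`, and `X_P := p(X)` (a subgroup of `U'` containing
`p(X ∩ U') = X ∩ U'`). Then the group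
`K = {χ ∈ Hom(X, ℂˣ) : χ = 1 on X ∩ U and on X ∩ U'}` is a finite (abelian) group,
isomorphic to `Hom(X_P/(X ∩ U'), ℂˣ)`. -/
theorem characters_trivial_on_summands_finite_and_iso
    (X : Type*) [AddCommGroup X] [Module.Free ℤ X] [Module.Finite ℤ X]
    (U U' : Submodule ℚ (ℚ ⊗[ℤ] X)) (hUU' : IsCompl U U')
    (ι : X →+ ℚ ⊗[ℤ] X) (hι : ∀ x : X, ι x = (1 : ℚ) ⊗ₜ[ℤ] x)
    (hU : Submodule.span ℚ (Set.range ι ∩ (U : Set (ℚ ⊗[ℤ] X))) = U)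
    (hU' : Submodule.span ℚ (Set.range ι ∩ (U' : Set (ℚ ⊗[ℤ] X))) = U')
    (p : (ℚ ⊗[ℤ] X) →ₗ[ℚ] ℚ ⊗[ℤ] X)
    (hpU : ∀ v ∈ U, p v = 0) (hpU' : ∀ v ∈ U', p v = v)
    (K : Subgroup (Multiplicative X →* ℂˣ))
    (hK : ∀ χ : Multiplicative X →* ℂˣ, χ ∈ K ↔
        (∀ x : X, ι x ∈ U → χ (Multiplicative.ofAdd x) = 1) ∧
        (∀ x : X, ι x ∈ U' → χ (Multiplicative.ofAdd x) = 1))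
    (XP : AddSubgroup (ℚ ⊗[ℤ] X))
    (hXP : XP = AddSubgroup.map p.toAddMonoidHom ι.range)
    (XU' : AddSubgroup (ℚ ⊗[ℤ] X))
    (hXU' : XU' = ι.range ⊓ U'.toAddSubgroup) :
    Finite K ∧
      Nonempty (K ≃*
        (Multiplicative (↥XP ⧸ (XU'.addSubgroupOf XP)) →* ℂˣ)) :=
  characters_trivial_on_summands_finite_and_iso_general X U U' hUU' ι hU hU' p hpU hpU' K hK XP hXP
    XU' hXU'
end
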